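/- (Equivalence of problems (15) and (21), second direction) Let (W_1,…,W_N, Q) be feasible for problem (15) and suppose t := Σ_{n=1}^N R^SEC_{u,n} > 0. Then R^SEC_{u,n} = φ_n t for every n, the triple (W_1,…,W_N, Q, t) is feasible for problem (21) with constraint (20) holding with equality for every n, and t/P^TOT(W_1,…,W_N,Q) = SEE(W_1,…,W_N,Q). -/

import Mathlib

/-
Proportionality `φ_m R_n = φ_n R_m` together with `∑ φ_n = 1` forces `R_n = φ_n t`.
As `φ_n t > 0`, the `max` in `R^SEC` is inactive and `R_{u,n} = φ_n t + R^REQ_n`.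
Inverting the logarithm, `θ_n(t)` is exactly the SINR `S/D` of user `n`, and
`((1 + θ)/θ) S = D + S` is then an identity, i.e. constraint (20) is active.
-/

open Matrix
open scoped ComplexOrder

/-- Real part of `Tr(A B)`. -/
noncomputable def trR {n : ℕ} (A B : Matrix (Fin n) (Fin n) ℂ) : ℝ :=
  (Matrix.trace (A * B)).re

/-- Euclidean (Frobenius) norm on ℂ^{N_t}. -/
noncomputable def euclNorm {n : ℕ} (v : Fin n → ℂ) : ℝ :=
  Real.sqrt (∑ i, ‖v i‖ ^ 2)

/-- Outer product channel matrix `H_n = h_n h_nᴴ`. -/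
noncomputable def Hmat {N Nt : ℕ} (h : Fin N → Fin Nt → ℂ) (n : Fin N) :
    Matrix (Fin Nt) (Fin Nt) ℂ :=
  Matrix.vecMulVec (h n) (star (h n))

/-- Data rate `R_{u,n}` of user `n`. -/
noncomputable def Ru {N Nt : ℕ} (h : Fin N → Fin Nt → ℂ) (σsq : Fin N → ℝ) (BW : ℝ)
    (W : Fin N → Matrix (Fin Nt) (Fin Nt) ℂ) (Q : Matrix (Fin Nt) (Fin Nt) ℂ)
    (n : Fin N) : ℝ :=
  BW * Real.log (1 + trR (Hmat h n) (W n) /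
    ((∑ k ∈ Finset.univ.erase n, trR (Hmat h n) (W k)) + trR (Hmat h n) Q + σsq n))

/-- Secrecy rate `R^SEC_{u,n}` of user `n`. -/
noncomputable def Rsec {N Nt : ℕ} (h : Fin N → Fin Nt → ℂ) (σsq : Fin N → ℝ) (BW : ℝ)
    (Rreq : Fin N → ℝ) (W : Fin N → Matrix (Fin Nt) (Fin Nt) ℂ)
    (Q : Matrix (Fin Nt) (Fin Nt) ℂ) (n : Fin N) : ℝ :=
  max (Ru h σsq BW W Q n - Rreq n) 0

/-- Total power consumption `P^TOT`. -/
noncomputable def Ptot {N Nt : ℕ} (φamp Pcir : ℝ)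
    (W : Fin N → Matrix (Fin Nt) (Fin Nt) ℂ) (Q : Matrix (Fin Nt) (Fin Nt) ℂ) : ℝ :=
  (1 / φamp) * ((∑ n, (Matrix.trace (W n)).re) + (Matrix.trace Q).re) + Pcir

/-- Secrecy energy efficiency `SEE`. -/
noncomputable def SEE {N Nt : ℕ} (h : Fin N → Fin Nt → ℂ) (σsq : Fin N → ℝ) (BW : ℝ)
    (Rreq : Fin N → ℝ) (φamp Pcir : ℝ)
    (W : Fin N → Matrix (Fin Nt) (Fin Nt) ℂ) (Q : Matrix (Fin Nt) (Fin Nt) ℂ) : ℝ :=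
  (∑ n, Rsec h σsq BW Rreq W Q n) / Ptot φamp Pcir W Q

/-- The robust information-leakage constraint for all pairs `(m, n)`. -/
def LeakOK {N Nt M : ℕ} (BW : ℝ) (Rreq : Fin N → ℝ)
    (ge : Fin M → Fin Nt → ℂ) (Θe σe : Fin M → ℝ)
    (W : Fin N → Matrix (Fin Nt) (Fin Nt) ℂ) (Q : Matrix (Fin Nt) (Fin Nt) ℂ) : Prop :=
  ∀ m n, ∀ Δ : Fin Nt → ℂ, euclNorm Δ ≤ Θe m →
    (star (ge m + Δ) ⬝ᵥ
      (((1 / (1 - Real.exp (-(Rreq n / BW))) : ℝ) : ℂ) • W n - (∑ k, W k) - Q).mulVec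
        (ge m + Δ)).re ≤ σe m

/-- The robust energy-harvesting constraint for all `i`. -/
def EHOK {Nt I : ℕ} (gh : Fin I → Fin Nt → ℂ) (Θh Preq ξ : Fin I → ℝ)
    {N : ℕ} (W : Fin N → Matrix (Fin Nt) (Fin Nt) ℂ)
    (Q : Matrix (Fin Nt) (Fin Nt) ℂ) : Prop :=
  ∀ i, ∀ Δ : Fin Nt → ℂ, euclNorm Δ ≤ Θh i →
    Preq i / ξ i ≤ (star (gh i + Δ) ⬝ᵥ ((∑ k, W k) + Q).mulVec (gh i + Δ)).re

/-- Feasibility for problem (15). -/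
noncomputable def Feasible15 {N Nt M I : ℕ}
    (h : Fin N → Fin Nt → ℂ) (σsq : Fin N → ℝ) (BW : ℝ) (φv Rreq : Fin N → ℝ)
    (ge : Fin M → Fin Nt → ℂ) (Θe σe : Fin M → ℝ)
    (gh : Fin I → Fin Nt → ℂ) (Θh Preq ξ : Fin I → ℝ) (Pmax : ℝ)
    (W : Fin N → Matrix (Fin Nt) (Fin Nt) ℂ) (Q : Matrix (Fin Nt) (Fin Nt) ℂ) : Prop :=
  (∀ n, (W n).PosSemidef) ∧ Q.PosSemidef ∧
  (∀ n, (W n).rank ≤ 1) ∧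
  (∀ m n, φv m * Rsec h σsq BW Rreq W Q n = φv n * Rsec h σsq BW Rreq W Q m) ∧
  LeakOK BW Rreq ge Θe σe W Q ∧
  EHOK gh Θh Preq ξ W Q ∧
  (∑ n, (Matrix.trace (W n)).re) + (Matrix.trace Q).re ≤ Pmax

/-- Feasibility for problem (21). -/
noncomputable def Feasible21 {N Nt M I : ℕ}
    (h : Fin N → Fin Nt → ℂ) (σsq : Fin N → ℝ) (BW : ℝ) (φv Rreq : Fin N → ℝ)
    (ge : Fin M → Fin Nt → ℂ) (Θe σe : Fin M → ℝ)
    (gh : Fin I → Fin Nt → ℂ) (Θh Preq ξ : Fin I → ℝ) (Pmax : ℝ)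
    (W : Fin N → Matrix (Fin Nt) (Fin Nt) ℂ) (Q : Matrix (Fin Nt) (Fin Nt) ℂ)
    (t : ℝ) : Prop :=
  (∀ n, (W n).PosSemidef) ∧ Q.PosSemidef ∧
  (∀ n, (W n).rank ≤ 1) ∧
  (∀ n, ((1 + (Real.exp (φv n * t / BW + Rreq n / BW) - 1)) /
        (Real.exp (φv n * t / BW + Rreq n / BW) - 1)) * trR (Hmat h n) (W n) ≥
      (∑ k, trR (Hmat h n) (W k)) + trR (Hmat h n) Q + σsq n) ∧
  LeakOK BW Rreq ge Θe σe W Q ∧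
  EHOK gh Θh Preq ξ W Q ∧
  (∑ n, (Matrix.trace (W n)).re) + (Matrix.trace Q).re ≤ Pmax

theorem eq_mul_sum_of_mul_eq_mul {ι R : Type*} [Fintype ι] [CommSemiring R] {φ x : ι → R}
    (hφ : ∑ i, φ i = 1) (hx : ∀ i j, φ i * x j = φ j * x i) (j : ι) :
    x j = φ j * ∑ i, x i := by
  calc x j = ∑ i, φ i * x j := by rw [← Finset.sum_mul, hφ, one_mul]
    _ = φ j * ∑ i, x i := by rw [Finset.mul_sum]; exact Finset.sum_congr rfl fun i _ => hx i j

theorem one_add_div_mul_eq_of_mul_log_one_add_div {S D B c : ℝ} (hS : 0 ≤ S) (hD : 0 < D)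
    (hB : 0 < B) (hc : 0 < c) (hlog : B * Real.log (1 + S / D) = c) :
    ((1 + (Real.exp (c / B) - 1)) / (Real.exp (c / B) - 1)) * S = S + D := by
  have hθ : Real.exp (c / B) - 1 = S / D := by
    rw [← hlog, mul_div_cancel_left₀ _ hB.ne', Real.exp_log (by positivity)]
    ring
  have hSD : 0 < S / D := hθ ▸ sub_pos.2 (Real.one_lt_exp_iff.2 (div_pos hc hB))
  have hS' : S ≠ 0 := ((div_pos_iff_of_pos_right hD).1 hSD).ne'
  rw [hθ]
  field_simp
  ring

theorem trR_vecMulVec_star_nonneg {n : ℕ} (v : Fin n → ℂ) {B : Matrix (Fin n) (Fin n) ℂ}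
    (hB : B.PosSemidef) : 0 ≤ trR (vecMulVec v (star v)) B := by
  have htr : trace (vecMulVec v (star v) * B) = star v ⬝ᵥ B *ᵥ v := by
    rw [vecMulVec_mul, trace_vecMulVec, dotProduct_comm, dotProduct_mulVec]
  exact (Complex.nonneg_iff.1 (htr ▸ hB.dotProduct_mulVec_nonneg v)).1

section Rates

variable {N Nt : ℕ} {h : Fin N → Fin Nt → ℂ} {σsq : Fin N → ℝ} {BW : ℝ}
  {W : Fin N → Matrix (Fin Nt) (Fin Nt) ℂ} {Q : Matrix (Fin Nt) (Fin Nt) ℂ}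

theorem Ru_eq_of_Rsec_eq {Rreq : Fin N → ℝ} {n : Fin N} {c : ℝ} (hc : 0 < c)
    (hsec : Rsec h σsq BW Rreq W Q n = c) : Ru h σsq BW W Q n = c + Rreq n := by
  rcases max_eq_iff.1 hsec with ⟨hRu, -⟩ | ⟨hzero, -⟩ <;> linarith

theorem interference_add_noise_pos {n : Fin N} (hσ : 0 < σsq n) (hW : ∀ k, (W k).PosSemidef)
    (hQ : Q.PosSemidef) :
    0 < (∑ k ∈ Finset.univ.erase n, trR (Hmat h n) (W k)) + trR (Hmat h n) Q + σsq n := by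
  have hI : 0 ≤ ∑ k ∈ Finset.univ.erase n, trR (Hmat h n) (W k) :=
    Finset.sum_nonneg fun k _ => trR_vecMulVec_star_nonneg (h n) (hW k)
  have hQn : 0 ≤ trR (Hmat h n) Q := trR_vecMulVec_star_nonneg (h n) hQ
  linarith

theorem sinr_constraint_eq_of_Ru_eq {n : Fin N} {r : ℝ} (hσ : 0 < σsq n) (hBW : 0 < BW)
    (hW : ∀ k, (W k).PosSemidef) (hQ : Q.PosSemidef) (hr : 0 < r)
    (hRu : Ru h σsq BW W Q n = r) :
    ((1 + (Real.exp (r / BW) - 1)) / (Real.exp (r / BW) - 1)) * trR (Hmat h n) (W n) =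
      (∑ k, trR (Hmat h n) (W k)) + trR (Hmat h n) Q + σsq n := by
  rw [← Finset.add_sum_erase _ _ (Finset.mem_univ n), add_assoc, add_assoc,
    ← add_assoc _ _ (σsq n)]
  exact one_add_div_mul_eq_of_mul_log_one_add_div (trR_vecMulVec_star_nonneg (h n) (hW n))
    (interference_add_noise_pos hσ hW hQ) hBW hr hRu

end Rates

theorem equiv_15_21_second_direction_general {N Nt M I : ℕ}
    (h : Fin N → Fin Nt → ℂ) (σsq : Fin N → ℝ) (hσ : ∀ n, 0 < σsq n)
    (BW : ℝ) (hBW : 0 < BW)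
    (φv : Fin N → ℝ) (hφ : ∀ n, 0 < φv n) (hφsum : ∑ n, φv n = 1)
    (Rreq : Fin N → ℝ) (hRreq : ∀ n, 0 < Rreq n)
    (ge : Fin M → Fin Nt → ℂ) (Θe : Fin M → ℝ)
    (σe : Fin M → ℝ)
    (gh : Fin I → Fin Nt → ℂ) (Θh : Fin I → ℝ)
    (Preq : Fin I → ℝ)
    (ξ : Fin I → ℝ)
    (Pmax : ℝ)
    (φamp : ℝ) (Pcir : ℝ)
    (W : Fin N → Matrix (Fin Nt) (Fin Nt) ℂ) (Q : Matrix (Fin Nt) (Fin Nt) ℂ)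
    (hfeas : Feasible15 h σsq BW φv Rreq ge Θe σe gh Θh Preq ξ Pmax W Q)
    (t : ℝ) (htdef : t = ∑ n, Rsec h σsq BW Rreq W Q n) (htpos : 0 < t) :
    (∀ n, Rsec h σsq BW Rreq W Q n = φv n * t) ∧
    Feasible21 h σsq BW φv Rreq ge Θe σe gh Θh Preq ξ Pmax W Q t ∧
    (∀ n, ((1 + (Real.exp (φv n * t / BW + Rreq n / BW) - 1)) /
        (Real.exp (φv n * t / BW + Rreq n / BW) - 1)) * trR (Hmat h n) (W n) =
      (∑ k, trR (Hmat h n) (W k)) + trR (Hmat h n) Q + σsq n) ∧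
    t / Ptot φamp Pcir W Q = SEE h σsq BW Rreq φamp Pcir W Q := by
  obtain ⟨hW, hQ, hrank, hprop, hleak, heh, hpow⟩ := hfeas
  have hRsec : ∀ n, Rsec h σsq BW Rreq W Q n = φv n * t := fun n =>
    htdef ▸ eq_mul_sum_of_mul_eq_mul hφsum hprop n
  have hactive : ∀ n, ((1 + (Real.exp (φv n * t / BW + Rreq n / BW) - 1)) /
        (Real.exp (φv n * t / BW + Rreq n / BW) - 1)) * trR (Hmat h n) (W n) =
      (∑ k, trR (Hmat h n) (W k)) + trR (Hmat h n) Q + σsq n := fun n => by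
    have hrate : 0 < φv n * t := mul_pos (hφ n) htpos
    rw [← add_div]
    exact sinr_constraint_eq_of_Ru_eq (hσ n) hBW hW hQ (by linarith [hRreq n])
      (Ru_eq_of_Rsec_eq hrate (hRsec n))
  exact ⟨hRsec, ⟨hW, hQ, hrank, fun n => (hactive n).ge, hleak, heh, hpow⟩, hactive,
    by rw [SEE, htdef]⟩

/-- Equivalence of problems (15) and (21), second direction: a feasible point of (15)
with positive sum secrecy rate `t` has secrecy rates exactly `φ_n t`, is feasible for (21)
at `t` with constraint (20) active for every `n`, and satisfies `t / P^TOT = SEE`. -/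
theorem equiv_15_21_second_direction {N Nt M I : ℕ} (hN : 0 < N) (hNt : 0 < Nt)
    (h : Fin N → Fin Nt → ℂ) (σsq : Fin N → ℝ) (hσ : ∀ n, 0 < σsq n)
    (BW : ℝ) (hBW : 0 < BW)
    (φv : Fin N → ℝ) (hφ : ∀ n, 0 < φv n) (hφsum : ∑ n, φv n = 1)
    (Rreq : Fin N → ℝ) (hRreq : ∀ n, 0 < Rreq n)
    (ge : Fin M → Fin Nt → ℂ) (Θe : Fin M → ℝ) (hΘe : ∀ m, 0 < Θe m)
    (σe : Fin M → ℝ) (hσe : ∀ m, 0 < σe m)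
    (gh : Fin I → Fin Nt → ℂ) (Θh : Fin I → ℝ) (hΘh : ∀ i, 0 < Θh i)
    (Preq : Fin I → ℝ) (hPreq : ∀ i, 0 < Preq i)
    (ξ : Fin I → ℝ) (hξ : ∀ i, 0 < ξ i ∧ ξ i ≤ 1)
    (Pmax : ℝ) (hPmax : 0 < Pmax)
    (φamp : ℝ) (hφamp : 0 < φamp ∧ φamp ≤ 1) (Pcir : ℝ) (hPcir : 0 < Pcir)
    (W : Fin N → Matrix (Fin Nt) (Fin Nt) ℂ) (Q : Matrix (Fin Nt) (Fin Nt) ℂ)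
    (hfeas : Feasible15 h σsq BW φv Rreq ge Θe σe gh Θh Preq ξ Pmax W Q)
    (t : ℝ) (htdef : t = ∑ n, Rsec h σsq BW Rreq W Q n) (htpos : 0 < t) :
    (∀ n, Rsec h σsq BW Rreq W Q n = φv n * t) ∧
    Feasible21 h σsq BW φv Rreq ge Θe σe gh Θh Preq ξ Pmax W Q t ∧
    (∀ n, ((1 + (Real.exp (φv n * t / BW + Rreq n / BW) - 1)) /
        (Real.exp (φv n * t / BW + Rreq n / BW) - 1)) * trR (Hmat h n) (W n) =
      (∑ k, trR (Hmat h n) (W k)) + trR (Hmat h n) Q + σsq n) ∧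
    t / Ptot φamp Pcir W Q = SEE h σsq BW Rreq φamp Pcir W Q :=
  equiv_15_21_second_direction_general h σsq hσ BW hBW φv hφ hφsum Rreq hRreq ge Θe σe gh Θh Preq ξ
    Pmax φamp Pcir W Q hfeas t htdef htpos
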